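/- arXiv:2207.00685 — 3 statements merged into one kernel-verified Lean document; each statement's English description precedes it below -/
import Mathlib

section
/- The relaxed problem at q̄₀ — maximize ρ∫(H(q') − H(q̄₀)) dπ(q') over Borel probability measures π on Δ(X) with barycenter q̄₀ subject to (κ̄/χ)∫(H(q') − H(q̄₀)) dπ(q') ≤ ∫(û(q') − û(q̄₀)) dπ(q') — admits a maximizer π* whose support is a finite set. (Existence part of the paper's Proposition 1.) -/
/-!
The constraints and the objective of the relaxed problem only depend on the moment vector
`∫ (q', H q', û q') dπ`. For probability measures on the compact simplex these vectors fill
exactly the convex hull of the image of `q ↦ (q, H q, û q)`: every moment vector lies in the hull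
(Jensen), and every point of the hull is a finite convex combination, i.e. the moment vector of a
finitely supported measure. By Carathéodory the hull of a compact set in finite dimensions is
compact, so the continuous objective attains its maximum on the closed feasible part of the hull,
at a point realized by a finitely supported measure.
-/

open MeasureTheory ProbabilityTheory Filter Set
open scoped NNReal ENNReal

/-- `û(q) = max_{a ∈ A} ∑_{x ∈ X} q_x u_{a,x}`. -/
noncomputable def uhat {X A : Type*} [Fintype X] [Fintype A] [Nonempty A]
    (u : A → X → ℝ) (q : X → ℝ) : ℝ :=
  ⨆ a : A, ∑ x : X, q x * u a x

/-- `π` is feasible in the relaxed problem at `q`: a Borel probability measure on the simplex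
with barycenter `q`, satisfying `(κ/χ)∫(H(q') − H(q)) dπ ≤ ∫(û(q') − û(q)) dπ`. -/
def RelaxedFeasible {X : Type*} [Fintype X] (H uh : (X → ℝ) → ℝ) (κ χ : ℝ)
    (q : X → ℝ) (π : Measure (X → ℝ)) : Prop :=
  IsProbabilityMeasure π ∧ π (stdSimplex ℝ X) = 1 ∧ (∫ q', q' ∂π) = q ∧
    (κ / χ) * (∫ q', (H q' - H q) ∂π) ≤ ∫ q', (uh q' - uh q) ∂π

section Caratheodory

variable {𝕜 E : Type*} [Field 𝕜] [LinearOrder 𝕜] [IsStrictOrderedRing 𝕜]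
  [AddCommGroup E] [Module 𝕜 E] [FiniteDimensional 𝕜 E]

theorem convexHull_eq_biUnion_image_sum_smul (s : Set E) :
    convexHull 𝕜 s = ⋃ k ∈ Iic (Module.finrank 𝕜 E + 1),
      (fun p : (Fin k → 𝕜) × (Fin k → E) => ∑ i, p.1 i • p.2 i) ''
        (stdSimplex 𝕜 (Fin k) ×ˢ univ.pi fun _ => s) := by
  apply Subset.antisymm
  · intro x hx
    obtain ⟨ι, _, z, w, hzs, hz, hw₀, hw₁, rfl⟩ := eq_pos_convex_span_of_mem_convexHull hx
    have hcard : Fintype.card ι ≤ Module.finrank 𝕜 E + 1 :=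
      hz.card_le_finrank_succ.trans (Nat.succ_le_succ (Submodule.finrank_le _))
    let e := (Fintype.equivFin ι).symm
    refine mem_biUnion (x := Fintype.card ι) hcard
      ⟨(w ∘ e, z ∘ e), ⟨⟨fun i => (hw₀ _).le, ?_⟩, fun i _ => hzs (mem_range_self _)⟩, ?_⟩
    · simpa [e.sum_comp] using hw₁
    · exact e.sum_comp fun i => w i • z i
  · simp only [iUnion_subset_iff]
    rintro k - _ ⟨⟨w, z⟩, ⟨hw, hz⟩, rfl⟩
    exact mem_convexHull_of_exists_fintype w z hw.1 hw.2 (fun i => hz i trivial) rfl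

end Caratheodory

theorem IsCompact.convexHull {E : Type*} [AddCommGroup E] [Module ℝ E] [TopologicalSpace E]
    [ContinuousAdd E] [ContinuousSMul ℝ E] [FiniteDimensional ℝ E] {s : Set E}
    (hs : IsCompact s) : IsCompact (convexHull ℝ s) := by
  rw [convexHull_eq_biUnion_image_sum_smul]
  refine (finite_Iic _).isCompact_biUnion fun k _ => ?_
  exact ((isCompact_stdSimplex ℝ _).prod (isCompact_univ_pi fun _ => hs)).image <|
    continuous_finsetSum _ fun i _ =>
      ((continuous_apply i).comp continuous_fst).smul
        ((continuous_apply i).comp continuous_snd)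

section FiniteCombination

variable {α ι : Type*} [MeasurableSpace α] [Fintype ι] {w : ι → ℝ} (y : ι → α)

theorem sum_smul_dirac_apply_eq_one (hw₀ : ∀ i, 0 ≤ w i) (hw₁ : ∑ i, w i = 1) {s : Set α}
    (hy : ∀ i, y i ∈ s) : (∑ i, ENNReal.ofReal (w i) • Measure.dirac (y i)) s = 1 := by
  simp only [Measure.coe_finsetSum, Finset.sum_apply, Measure.smul_apply,
    Measure.dirac_apply_of_mem (hy _), smul_eq_mul, mul_one]
  rw [← ENNReal.ofReal_sum_of_nonneg fun i _ => hw₀ i, hw₁, ENNReal.ofReal_one]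

theorem integral_sum_smul_dirac [MeasurableSingletonClass α] {V : Type*}
    [NormedAddCommGroup V] [NormedSpace ℝ V] [CompleteSpace V] (hw₀ : ∀ i, 0 ≤ w i) (f : α → V) :
    ∫ x, f x ∂(∑ i, ENNReal.ofReal (w i) • Measure.dirac (y i)) = ∑ i, w i • f (y i) := by
  rw [integral_finsetSum_measure fun i _ =>
    (integrable_dirac enorm_lt_top).smul_measure ENNReal.ofReal_ne_top]
  simp only [integral_smul_measure, integral_dirac, ENNReal.toReal_ofReal (hw₀ _)]

end FiniteCombination

section Moments

variable {E V : Type*} [TopologicalSpace E] [T2Space E] [MeasurableSpace E]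
  [OpensMeasurableSpace E] [NormedAddCommGroup V] {K : Set E} {F : E → V}

theorem ContinuousOn.integrable_of_measure_eq_one {π : Measure E} [IsProbabilityMeasure π]
    (hF : ContinuousOn F K) (hK : IsCompact K) (hπK : π K = 1) : Integrable F π := by
  rw [← Measure.restrict_eq_self_of_ae_mem ((mem_ae_iff_prob_eq_one hK.measurableSet).2 hπK)]
  exact hF.integrableOn_compact hK

variable [NormedSpace ℝ V] [FiniteDimensional ℝ V]

theorem integral_mem_convexHull_image {π : Measure E} [IsProbabilityMeasure π]
    (hF : ContinuousOn F K) (hK : IsCompact K) (hπK : π K = 1) :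
    ∫ x, F x ∂π ∈ convexHull ℝ (F '' K) := by
  have hK_ae : ∀ᵐ x ∂π, x ∈ K := (mem_ae_iff_prob_eq_one hK.measurableSet).2 hπK
  refine (convex_convexHull ℝ _).integral_mem (hK.image_of_continuousOn hF).convexHull.isClosed
    ?_ (hF.integrable_of_measure_eq_one hK hπK)
  filter_upwards [hK_ae] with x hx using subset_convexHull ℝ _ (mem_image_of_mem F hx)

theorem exists_finite_support_integral_eq_of_mem_convexHull_image {v : V}
    (hv : v ∈ convexHull ℝ (F '' K)) :
    ∃ μ : Measure E, IsProbabilityMeasure μ ∧ (∃ S : Finset E, ↑S ⊆ K ∧ μ S = 1) ∧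
      ∫ x, F x ∂μ = v := by
  classical
  obtain ⟨ι, _, w, z, hw₀, hw₁, hz, rfl⟩ := mem_convexHull_iff_exists_fintype.1 hv
  choose y hyK hyz using hz
  refine ⟨∑ i, ENNReal.ofReal (w i) • Measure.dirac (y i),
    ⟨sum_smul_dirac_apply_eq_one y hw₀ hw₁ fun i => mem_univ _⟩,
    ⟨Finset.univ.image y, by simpa [Set.subset_def] using hyK,
      sum_smul_dirac_apply_eq_one y hw₀ hw₁ fun i => by simp⟩, ?_⟩
  simp only [integral_sum_smul_dirac y hw₀, hyz]

theorem exists_finite_support_isMaxOn_integral (hK : IsCompact K) (hF : ContinuousOn F K)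
    {T : Set V} (hT : IsClosed T) {φ : V → ℝ} (hφ : ContinuousOn φ T)
    (hne : (convexHull ℝ (F '' K) ∩ T).Nonempty) :
    ∃ μ : Measure E, IsProbabilityMeasure μ ∧ μ K = 1 ∧ ∫ x, F x ∂μ ∈ T ∧
      (∃ S : Finset E, μ S = 1) ∧
      ∀ π : Measure E, IsProbabilityMeasure π → π K = 1 → ∫ x, F x ∂π ∈ T →
        φ (∫ x, F x ∂π) ≤ φ (∫ x, F x ∂μ) := by
  have hcompact : IsCompact (convexHull ℝ (F '' K) ∩ T) :=
    (hK.image_of_continuousOn hF).convexHull.inter_right hT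
  obtain ⟨v, ⟨hv, hvT⟩, hvmax⟩ := hcompact.exists_isMaxOn hne (hφ.mono inter_subset_right)
  obtain ⟨μ, hμ, ⟨S, hSK, hμS⟩, rfl⟩ :=
    exists_finite_support_integral_eq_of_mem_convexHull_image hv
  refine ⟨μ, hμ, le_antisymm prob_le_one (hμS ▸ measure_mono hSK), hvT, ⟨S, hμS⟩,
    fun π _ hπK hπT => hvmax ⟨integral_mem_convexHull_image hF hK hπK, hπT⟩⟩

end Moments

theorem integral_sub_const {α V : Type*} [MeasurableSpace α] [NormedAddCommGroup V]
    [NormedSpace ℝ V] [CompleteSpace V] {μ : Measure α} [IsProbabilityMeasure μ] {g : α → V}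
    (hg : Integrable g μ) (c : V) : ∫ x, (g x - c) ∂μ = ∫ x, g x ∂μ - c := by
  rw [integral_sub hg (integrable_const c), integral_const, probReal_univ, one_smul]

section RelaxedProblem

variable {X : Type*}

/-- The constraint of the relaxed problem at `q`, read on the moment vector
`(∫ q' dπ, ∫ H dπ, ∫ û dπ)`. -/
def relaxedConstraintSet (H uh : (X → ℝ) → ℝ) (κ χ : ℝ) (q : X → ℝ) :
    Set ((X → ℝ) × ℝ × ℝ) :=
  {v | v.1 = q ∧ κ / χ * (v.2.1 - H q) ≤ v.2.2 - uh q}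

theorem isClosed_relaxedConstraintSet (H uh : (X → ℝ) → ℝ) (κ χ : ℝ) (q : X → ℝ) :
    IsClosed (relaxedConstraintSet H uh κ χ q) :=
  (isClosed_eq continuous_fst continuous_const).inter (isClosed_le
    (continuous_const.mul ((continuous_fst.comp continuous_snd).sub continuous_const))
    ((continuous_snd.comp continuous_snd).sub continuous_const))

variable [Fintype X]

theorem continuous_uhat {A : Type*} [Fintype A] [Nonempty A] (u : A → X → ℝ) :
    Continuous (uhat u) := by
  have h : uhat u = fun q => Finset.univ.sup' Finset.univ_nonempty
      fun a : A => ∑ x : X, q x * u a x := by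
    funext q; rw [Finset.sup'_univ_eq_ciSup]; rfl
  rw [h]
  exact Continuous.finset_sup'_apply Finset.univ_nonempty fun a _ => by fun_prop

variable {H uh : (X → ℝ) → ℝ}

theorem integral_pair_pair (hH : Continuous H) (huh : Continuous uh) {π : Measure (X → ℝ)}
    [IsProbabilityMeasure π] (hπK : π (stdSimplex ℝ X) = 1) :
    ∫ q', (q', H q', uh q') ∂π = (∫ q', q' ∂π, ∫ q', H q' ∂π, ∫ q', uh q' ∂π) := by
  have hK := isCompact_stdSimplex ℝ X
  have hidi : Integrable (fun q' : X → ℝ => q') π :=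
    continuous_id.continuousOn.integrable_of_measure_eq_one hK hπK
  have hHi := hH.continuousOn.integrable_of_measure_eq_one hK hπK
  have huhi := huh.continuousOn.integrable_of_measure_eq_one hK hπK
  rw [integral_pair hidi (hHi.prodMk huhi), integral_pair hHi huhi]

theorem relaxedFeasible_iff (hH : Continuous H) (huh : Continuous uh) {κ χ : ℝ} {q : X → ℝ}
    {π : Measure (X → ℝ)} :
    RelaxedFeasible H uh κ χ q π ↔ IsProbabilityMeasure π ∧ π (stdSimplex ℝ X) = 1 ∧
      ∫ q', (q', H q', uh q') ∂π ∈ relaxedConstraintSet H uh κ χ q := by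
  refine and_congr_right fun hπ => and_congr_right fun hπK => ?_
  have hK := isCompact_stdSimplex ℝ X
  rw [integral_pair_pair hH huh hπK,
    integral_sub_const (hH.continuousOn.integrable_of_measure_eq_one hK hπK),
    integral_sub_const (huh.continuousOn.integrable_of_measure_eq_one hK hπK)]
  rfl

end RelaxedProblem

theorem stmt1_general
    {X A : Type*} [Fintype X] [Fintype A] [Nonempty A]
    (u : A → X → ℝ)
    (H : (X → ℝ) → ℝ) (hH : ContDiff ℝ 2 H)
    (κ χ ρ : ℝ)
    (qbar : X → ℝ) (hqbar : qbar ∈ stdSimplex ℝ X) :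
    ∃ πstar : Measure (X → ℝ),
      RelaxedFeasible H (uhat u) κ χ qbar πstar ∧
      (∀ π : Measure (X → ℝ), RelaxedFeasible H (uhat u) κ χ qbar π →
        ρ * (∫ q', (H q' - H qbar) ∂π) ≤ ρ * (∫ q', (H q' - H qbar) ∂πstar)) ∧
      (∃ S : Finset (X → ℝ), πstar (↑S) = 1) := by
  have hHc := hH.continuous
  have huc := continuous_uhat u
  have hK := isCompact_stdSimplex ℝ X
  obtain ⟨μ, hμ, hμK, hμT, hμS, hμmax⟩ := exists_finite_support_isMaxOn_integral hK
    (F := fun q => (q, H q, uhat u q)) (by fun_prop)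
    (isClosed_relaxedConstraintSet H (uhat u) κ χ qbar)
    (φ := fun v => ρ * (v.2.1 - H qbar)) (by fun_prop)
    ⟨_, subset_convexHull ℝ _ (mem_image_of_mem _ hqbar), rfl, by simp⟩
  have hobjective : ∀ π : Measure (X → ℝ), IsProbabilityMeasure π → π (stdSimplex ℝ X) = 1 →
      ρ * ∫ q', (H q' - H qbar) ∂π = ρ * ((∫ q', (q', H q', uhat u q') ∂π).2.1 - H qbar) :=
    fun π _ hπK => by
      rw [integral_pair_pair hHc huc hπK,
        integral_sub_const (hHc.continuousOn.integrable_of_measure_eq_one hK hπK)]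
  refine ⟨μ, (relaxedFeasible_iff hHc huc).2 ⟨hμ, hμK, hμT⟩, fun π hπ => ?_, hμS⟩
  obtain ⟨hπ, hπK, hπT⟩ := (relaxedFeasible_iff hHc huc).1 hπ
  rw [hobjective π hπ hπK, hobjective μ hμ hμK]
  exact hμmax π hπ hπK hπT

/-- **existence part of the paper's Proposition 1.** The relaxed problem at `q̄₀`
(maximize `ρ∫(H(q') − H(q̄₀)) dπ` over feasible `π`) admits a maximizer `π*` whose support
is a finite set. -/
theorem stmt1
    {X A : Type*} [Fintype X] [Fintype A] [Nonempty A]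
    (hX : 2 ≤ Fintype.card X)
    (u : A → X → ℝ)
    (H : (X → ℝ) → ℝ) (hH : ContDiff ℝ 2 H)
    (m : ℝ) (hm : 0 < m) (hHconv : StrongConvexOn (stdSimplex ℝ X) m H)
    (κ χ ρ : ℝ) (hκ : 0 < κ) (hχ : 0 < χ) (hρ : 0 < ρ)
    (qbar : X → ℝ) (hqbar : qbar ∈ stdSimplex ℝ X) :
    ∃ πstar : Measure (X → ℝ),
      RelaxedFeasible H (uhat u) κ χ qbar πstar ∧
      (∀ π : Measure (X → ℝ), RelaxedFeasible H (uhat u) κ χ qbar π →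
        ρ * (∫ q', (H q' - H qbar) ∂π) ≤ ρ * (∫ q', (H q' - H qbar) ∂πstar)) ∧
      (∃ S : Finset (X → ℝ), πstar (↑S) = 1) :=
  stmt1_general u H hH κ χ ρ qbar hqbar
end

section
/- Let π* be a non-degenerate Borel probability measure on Δ(X) with barycenter q̄₀ satisfying ∫(û(q') − û(q̄₀)) dπ*(q') = (κ̄/χ)∫(H(q') − H(q̄₀)) dπ*(q') > 0, let α* = χ / ∫(H(q') − H(q̄₀)) dπ*(q'), and let (q_t), (F_t), T be the α*-dilution of π*. Then for every stopping time τ̂ of (F_t) with E[τ̂] < ∞ and every Borel probability measure π̂ on Δ(X) that is a mean-preserving contraction of the law of q_{τ̂} (i.e., ∫ f dπ̂ ≤ E[f(q_{τ̂})] for every continuous convex f : Δ(X) → ℝ), one has ∫ û dπ̂ − κ̄·E[τ̂] ≤ û(q̄₀). (Paper's Proposition 5: full attention is incentive compatible.) -/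
open MeasureTheory ProbabilityTheory Filter Set
open scoped NNReal ENNReal

/-!
Before the jump time `T` every path of the dilution sits at `q̄₀`, so the natural filtration
cannot tell those outcomes apart: a stopping time `τ̂` agrees with a deterministic time
`s ∈ [0, ∞]` up to `T`, that is `τ̂ ∧ T = s ∧ T`. Hence `q_τ̂ = Q` on the event `{T ≤ s}`, which
is independent of `Q`, and `q_τ̂ = q̄₀` off it, so the indifference condition on `π*` gives
`E[û(q_τ̂)] = û(q̄₀) + P(T ≤ s) κ̄ / α*`. For the exponential clock `P(T ≤ s) = α* E[T ∧ s]`,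
which is at most `α* E[τ̂]`. Finally `û` is convex and continuous, so the mean-preserving
contraction `π̂` has `∫ û dπ̂ ≤ E[û(q_τ̂)]`.
-/

theorem ConvexOn.ciSup_of_finite {𝕜 E ι : Type*} [Semiring 𝕜] [PartialOrder 𝕜] [AddCommMonoid E]
    [Module 𝕜 E] [Finite ι] [Nonempty ι] {s : Set E} {f : ι → E → ℝ}
    [Module 𝕜 ℝ] [PosSMulMono 𝕜 ℝ]
    (hf : ∀ i, ConvexOn 𝕜 s (f i)) : ConvexOn 𝕜 s fun x => ⨆ i, f i x := by
  refine ⟨(hf (Classical.arbitrary ι)).1, fun x hx y hy a b ha hb hab => ciSup_le fun i => ?_⟩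
  refine ((hf i).2 hx hy ha hb hab).trans (add_le_add ?_ ?_) <;>
    exact smul_le_smul_of_nonneg_left (le_ciSup (Finite.bddAbove_range fun j => f j _) i) ‹_›

theorem ContinuousOn.integrable_of_ae_mem_compact {α E : Type*} [TopologicalSpace α]
    [MeasurableSpace α] [OpensMeasurableSpace α] [T2Space α] [NormedAddCommGroup E]
    {μ : Measure α} [IsFiniteMeasureOnCompacts μ] {K : Set α} (hK : IsCompact K) {f : α → E}
    (hf : ContinuousOn f K) (hμ : ∀ᵐ x ∂μ, x ∈ K) : Integrable f μ :=
  Measure.restrict_eq_self_of_ae_mem hμ ▸ hf.integrableOn_compact hK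

section Uhat

variable {X A : Type*} [Fintype X] [Fintype A] [Nonempty A] (u : A → X → ℝ)

theorem uhat_convexOn : ConvexOn ℝ univ (uhat u) := by
  refine ConvexOn.ciSup_of_finite fun a => ?_
  convert (Fintype.linearCombination ℝ (u a)).convexOn convex_univ using 2 with q
  simp [Fintype.linearCombination_apply]

theorem continuous_uhat_s11 : Continuous (uhat u) :=
  (uhat_convexOn u).locallyLipschitz.continuous

end Uhat

section Exponential

open Real

variable {Ω : Type*} {mΩ : MeasurableSpace Ω} {P : Measure Ω} {α : ℝ} {T : Ω → ℝ≥0}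

theorem measureReal_lt_of_survival
    (hTexp : ∀ t : ℝ≥0, P {ω | t < T ω} = ENNReal.ofReal (exp (-(α * t)))) {t : ℝ} (ht : 0 ≤ t) :
    P.real {ω | t < T ω} = exp (-(α * t)) := by
  have h := hTexp t.toNNReal
  simp only [Real.coe_toNNReal t ht, Real.toNNReal_lt_iff_lt_coe ht] at h
  rw [measureReal_def, h, ENNReal.toReal_ofReal (exp_pos _).le]

theorem measureReal_le_of_survival [IsProbabilityMeasure P] (hT : Measurable T)
    (hTexp : ∀ t : ℝ≥0, P {ω | t < T ω} = ENNReal.ofReal (exp (-(α * t)))) (c : ℝ≥0) :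
    P.real {ω | T ω ≤ c} = 1 - exp (-(α * c)) := by
  have hc : {ω | T ω ≤ c} = {ω | (c : ℝ) < T ω}ᶜ := by ext; simp
  rw [hc, probReal_compl_eq_one_sub (measurableSet_lt measurable_const (by fun_prop)),
    measureReal_lt_of_survival hTexp c.coe_nonneg]

theorem mul_integral_min_of_survival [IsFiniteMeasure P] (hT : Measurable T)
    (hTexp : ∀ t : ℝ≥0, P {ω | t < T ω} = ENNReal.ofReal (exp (-(α * t)))) (c : ℝ≥0) :
    α * ∫ ω, (min (T ω) c : ℝ) ∂P = 1 - exp (-(α * c)) := by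
  have hint : Integrable (fun ω => (min (T ω) c : ℝ)) P :=
    Integrable.of_bound (by fun_prop) c (Eventually.of_forall fun ω => by simp [abs_of_nonneg])
  have hlayer : ∀ t ∈ Ioi (0 : ℝ),
      P.real {ω | t < (min (T ω) c : ℝ)} = (Iio (c : ℝ)).indicator (fun t => exp (-(α * t))) t := by
    intro t ht
    by_cases htc : t < c
    · simpa [htc] using measureReal_lt_of_survival hTexp (le_of_lt ht)
    · simp [htc]
  rw [hint.integral_eq_integral_meas_lt (Eventually.of_forall fun ω => by positivity),
    setIntegral_congr_fun measurableSet_Ioi hlayer, integral_indicator measurableSet_Iio,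
    Measure.restrict_restrict measurableSet_Iio, Iio_inter_Ioi, ← integral_Ioc_eq_integral_Ioo,
    ← intervalIntegral.integral_of_le c.coe_nonneg,
    intervalIntegral.mul_integral_comp_mul_left (f := fun y => exp (-y)),
    intervalIntegral.integral_comp_neg, integral_exp]
  simp

theorem measureReal_le_le_mul_integral_of_min_le [IsProbabilityMeasure P] (hα : 0 < α)
    (hT : Measurable T)
    (hTexp : ∀ t : ℝ≥0, P {ω | t < T ω} = ENNReal.ofReal (exp (-(α * t))))
    {τ : Ω → ℝ≥0} (hτ : Integrable (fun ω => (τ ω : ℝ)) P) {s : WithTop ℝ≥0}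
    (hs : ∀ ω, min (T ω : WithTop ℝ≥0) s ≤ τ ω) :
    P.real {ω | (T ω : WithTop ℝ≥0) ≤ s} ≤ α * ∫ ω, (τ ω : ℝ) ∂P := by
  have hcapped : ∀ c : ℝ≥0, (c : WithTop ℝ≥0) ≤ s → 1 - exp (-(α * c)) ≤ α * ∫ ω, (τ ω : ℝ) ∂P := by
    intro c hc
    rw [← mul_integral_min_of_survival hT hTexp c]
    refine mul_le_mul_of_nonneg_left (integral_mono_of_nonneg (.of_forall fun ω => by positivity)
      hτ (.of_forall fun ω => ?_)) hα.le
    have := (min_le_min_left _ hc).trans (hs ω)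
    exact_mod_cast this
  induction s using WithTop.recTopCoe with
  | top =>
    simp only [le_top, ofPred_true, probReal_univ]
    have hlim : Tendsto (fun n : ℕ => 1 - exp (-(α * n))) atTop (nhds 1) := by
      simpa using tendsto_const_nhds.sub (tendsto_exp_atBot.comp
        (tendsto_neg_atTop_atBot.comp (tendsto_natCast_atTop_atTop.const_mul_atTop hα)))
    exact le_of_tendsto' hlim fun n => by exact_mod_cast hcapped n le_top
  | coe c =>
    simp only [WithTop.coe_le_coe]
    exact (measureReal_le_of_survival hT hTexp c).trans_le (hcapped c le_rfl)

end Exponential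

theorem MeasureTheory.Filtration.mem_iff_mem_of_measurableSet_natural {Ω ι : Type*}
    {m : MeasurableSpace Ω} [Preorder ι] {β : ι → Type*} [∀ i, TopologicalSpace (β i)]
    [∀ i, TopologicalSpace.MetrizableSpace (β i)] [∀ i, MeasurableSpace (β i)]
    [∀ i, BorelSpace (β i)] {u : (i : ι) → Ω → β i} (hu : ∀ i, StronglyMeasurable (u i))
    {i : ι} {s : Set Ω} (hs : MeasurableSet[Filtration.natural u hu i] s) {ω ω' : Ω}
    (h : ∀ j ≤ i, u j ω = u j ω') : ω ∈ s ↔ ω' ∈ s := by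
  rw [Filtration.natural_eq_comap] at hs
  obtain ⟨E, -, rfl⟩ := hs
  have hpath : (fun j : Iic i => u j ω) = fun j : Iic i => u j ω' := funext fun j => h j j.2
  simp only [mem_preimage, hpath]

theorem exists_min_eq_min_of_le_iff_le {Ω ι : Type*} [LinearOrder ι] {τ T : Ω → ι}
    (h : ∀ t ω ω', t < T ω → t < T ω' → (τ ω ≤ t ↔ τ ω' ≤ t)) :
    ∃ s : WithTop ι, ∀ ω, min (τ ω : WithTop ι) (T ω) = min s (T ω) := by
  by_cases h0 : ∃ ω₀, τ ω₀ < T ω₀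
  · obtain ⟨ω₀, hω₀⟩ := h0
    refine ⟨τ ω₀, fun ω => ?_⟩
    suffices min (τ ω) (T ω) = min (τ ω₀) (T ω) by exact_mod_cast this
    rcases lt_or_ge (τ ω) (T ω) with hω | hω
    · have : τ ω = τ ω₀ := by
        rcases le_total (τ ω) (τ ω₀) with hle | hle
        · exact le_antisymm hle ((h _ ω ω₀ hω (hle.trans_lt hω₀)).1 le_rfl)
        · exact le_antisymm ((h _ ω₀ ω hω₀ (hle.trans_lt hω)).1 le_rfl) hle
      rw [this]
    · have : T ω ≤ τ ω₀ := by
        by_contra! hlt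
        exact ((h _ ω₀ ω hω₀ hlt).1 le_rfl).not_gt (hlt.trans_le hω)
      rw [min_eq_right hω, min_eq_right this]
  · push Not at h0
    exact ⟨⊤, fun ω => by simpa using h0 ω⟩

theorem ProbabilityTheory.IndepFun.integral_indicator_preimage_mul {Ω β γ : Type*}
    {mΩ : MeasurableSpace Ω} [MeasurableSpace β] [MeasurableSpace γ] {P : Measure Ω}
    {T : Ω → β} {Q : Ω → γ} (h : IndepFun T Q P) (hT : Measurable T) (hQ : Measurable Q)
    {S : Set β} (hS : MeasurableSet S) {g : γ → ℝ} (hg : Measurable g) :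
    ∫ ω, (T ⁻¹' S).indicator (fun ω => g (Q ω)) ω ∂P = P.real (T ⁻¹' S) * ∫ ω, g (Q ω) ∂P := by
  have hprod : (T ⁻¹' S).indicator (fun ω => g (Q ω)) = (S.indicator 1 ∘ T) * (g ∘ Q) := by
    ext ω
    by_cases hω : T ω ∈ S <;> simp [hω]
  rw [hprod, h.integral_comp_mul_comp hT.aemeasurable hQ.aemeasurable
    (measurable_one.indicator hS).aestronglyMeasurable hg.aestronglyMeasurable,
    ← integral_indicator_one (hT hS)]
  rfl

section Dilution

variable {Ω E : Type*} {mΩ : MeasurableSpace Ω} [MeasurableSpace E]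
  {T : Ω → ℝ≥0} {Q : Ω → E} {qbar : E} {q : ℝ≥0 → Ω → E}

theorem exists_min_eq_min_of_isStoppingTime_natural [TopologicalSpace E]
    [TopologicalSpace.MetrizableSpace E] [BorelSpace E]
    (hq : ∀ t ω, q t ω = if t < T ω then qbar else Q ω) (hqsm : ∀ t, StronglyMeasurable (q t))
    {τ : Ω → ℝ≥0}
    (hτ : IsStoppingTime (Filtration.natural q hqsm) fun ω => (τ ω : WithTop ℝ≥0)) :
    ∃ s : WithTop ℝ≥0, ∀ ω, min (τ ω : WithTop ℝ≥0) (T ω) = min s (T ω) := by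
  refine exists_min_eq_min_of_le_iff_le fun t ω ω' hω hω' => ?_
  have := Filtration.mem_iff_mem_of_measurableSet_natural hqsm (hτ t) (ω := ω) (ω' := ω')
    fun j hj => by simp [hq, hj.trans_lt hω, hj.trans_lt hω']
  simpa only [mem_ofPred_eq, WithTop.coe_le_coe] using this

theorem integral_comp_stopped_of_min_eq {P : Measure Ω} [IsProbabilityMeasure P]
    (hq : ∀ t ω, q t ω = if t < T ω then qbar else Q ω) (hT : Measurable T) (hQ : Measurable Q)
    (hindep : IndepFun T Q P) {τ : Ω → ℝ≥0} {s : WithTop ℝ≥0}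
    (hs : ∀ ω, min (τ ω : WithTop ℝ≥0) (T ω) = min s (T ω)) {f : E → ℝ} (hf : Measurable f)
    (hfQ : Integrable (fun ω => f (Q ω)) P) :
    ∫ ω, f (q (τ ω) ω) ∂P =
      f qbar + P.real {ω | (T ω : WithTop ℝ≥0) ≤ s} * ∫ ω, (f (Q ω) - f qbar) ∂P := by
  set S : Set ℝ≥0 := {t | (t : WithTop ℝ≥0) ≤ s}
  have hS : MeasurableSet S := WithTop.measurable_coe measurableSet_Iic
  have hjump :
      ∀ ω, f (q (τ ω) ω) = f qbar + (T ⁻¹' S).indicator (fun ω => f (Q ω) - f qbar) ω := by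
    intro ω
    have hTτ : T ω ≤ τ ω ↔ T ω ∈ S := by
      rw [← WithTop.coe_le_coe, ← min_eq_right_iff, hs ω, min_eq_right_iff]
      rfl
    by_cases h : T ω ≤ τ ω
    · simp [hq, not_lt.2 h, hTτ.1 h]
    · simp [hq, not_le.1 h, mt hTτ.2 h]
  simp_rw [hjump]
  have hint : Integrable (fun ω => f (Q ω) - f qbar) P := hfQ.sub (integrable_const _)
  rw [integral_add (integrable_const _) (hint.indicator (hT hS)),
    hindep.integral_indicator_preimage_mul (g := fun x => f x - f qbar) hT hQ hS
      (hf.sub measurable_const)]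
  simp [S]

end Dilution

theorem stmt11_general
    {X A : Type*} [Fintype X] [Fintype A] [Nonempty A]
    (u : A → X → ℝ)
    (H : (X → ℝ) → ℝ)
    (κ χ : ℝ) (hκ : 0 < κ) (hχ : 0 < χ)
    (qbar : X → ℝ)
    -- the measure π* and its properties
    (πstar : Measure (X → ℝ)) (hπprob : IsProbabilityMeasure πstar)
    (hπsupp : πstar (stdSimplex ℝ X) = 1)
    (hπpos : 0 < ∫ q', (H q' - H qbar) ∂πstar)
    (hπeq : (∫ q', (uhat u q' - uhat u qbar) ∂πstar) =
      (κ / χ) * ∫ q', (H q' - H qbar) ∂πstar)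
    (αstar : ℝ) (hα : αstar = χ / ∫ q', (H q' - H qbar) ∂πstar)
    -- the α*-dilution of π*
    {Ω : Type*} {mΩ : MeasurableSpace Ω} (P : Measure Ω) [IsProbabilityMeasure P]
    (T : Ω → ℝ≥0) (hTmeas : Measurable T)
    (hTexp : ∀ t : ℝ≥0, P {ω | t < T ω} = ENNReal.ofReal (Real.exp (-(αstar * (t : ℝ)))))
    (Q : Ω → (X → ℝ)) (hQmeas : Measurable Q)
    (hQlaw : Measure.map Q P = πstar)
    (hindep : IndepFun T Q P)
    (q : ℝ≥0 → Ω → (X → ℝ))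
    (hq : ∀ t ω, q t ω = if t < T ω then qbar else Q ω)
    (hqsm : ∀ t, StronglyMeasurable (q t))
    (𝒢 : Filtration ℝ≥0 mΩ) (h𝒢 : 𝒢 = Filtration.natural q hqsm) :
    ∀ τhat : Ω → ℝ≥0, IsStoppingTime 𝒢 (fun ω => (τhat ω : WithTop ℝ≥0)) → Integrable (fun ω => (τhat ω : ℝ)) P →
    ∀ πhat : Measure (X → ℝ), IsProbabilityMeasure πhat → πhat (stdSimplex ℝ X) = 1 →
      -- π̂ is a mean-preserving contraction of the law of q_τ̂
      (∀ f : (X → ℝ) → ℝ, ContinuousOn f (stdSimplex ℝ X) →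
        ConvexOn ℝ (stdSimplex ℝ X) f →
        (∫ q', f q' ∂πhat) ≤ ∫ ω, f (q (τhat ω) ω) ∂P) →
      (∫ q', uhat u q' ∂πhat) - κ * (∫ ω, (τhat ω : ℝ) ∂P) ≤ uhat u qbar := by
  intro τhat hτ hτint πhat _ _ hMPC
  subst h𝒢
  obtain ⟨s, hs⟩ := exists_min_eq_min_of_isStoppingTime_natural hq hqsm hτ
  have hαpos : 0 < αstar := hα ▸ div_pos hχ hπpos
  have hsimplex : ∀ᵐ q' ∂πstar, q' ∈ stdSimplex ℝ X :=
    (ae_mem_iff_measure_eq (isClosed_stdSimplex ℝ X).measurableSet.nullMeasurableSet).2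
      (by rw [hπsupp, measure_univ])
  have hint : Integrable (uhat u) πstar :=
    (continuous_uhat_s11 u).continuousOn.integrable_of_ae_mem_compact (isCompact_stdSimplex ℝ X)
      hsimplex
  have hintQ : Integrable (fun ω => uhat u (Q ω)) P := (hQlaw ▸ hint).comp_measurable hQmeas
  have hmean : ∫ ω, (uhat u (Q ω) - uhat u qbar) ∂P = κ / αstar := by
    rw [← integral_map hQmeas.aemeasurable (f := fun q' => uhat u q' - uhat u qbar)
      ((continuous_uhat_s11 u).sub continuous_const).aestronglyMeasurable, hQlaw, hπeq, hα]
    field_simp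
  have hvalue := integral_comp_stopped_of_min_eq hq hTmeas hQmeas hindep hs
    (continuous_uhat_s11 u).measurable hintQ
  have hcost := measureReal_le_le_mul_integral_of_min_le hαpos hTmeas hTexp hτint (s := s)
    fun ω => by rw [min_comm, ← hs]; exact min_le_left _ _
  have hmpc := hMPC (uhat u) (continuous_uhat_s11 u).continuousOn
    ((uhat_convexOn u).subset (subset_univ _) (convex_stdSimplex ℝ X))
  rw [hvalue, hmean] at hmpc
  have hgain_le_cost :
      P.real {ω | (T ω : WithTop ℝ≥0) ≤ s} * (κ / αstar) ≤ κ * ∫ ω, (τhat ω : ℝ) ∂P :=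
    calc _ ≤ (αstar * ∫ ω, (τhat ω : ℝ) ∂P) * (κ / αstar) :=
          mul_le_mul_of_nonneg_right hcost (div_nonneg hκ.le hαpos.le)
      _ = κ * ∫ ω, (τhat ω : ℝ) ∂P := by field_simp
  linarith

/-- **paper's Proposition 5: full attention is incentive compatible.**
Let `π*` be a non-degenerate probability measure on the simplex with barycenter `q̄₀`
satisfying `∫(û − û(q̄₀)) dπ* = (κ̄/χ)∫(H − H(q̄₀)) dπ* > 0`, and let `(q_t), (F_t), T` be
its `α*`-dilution with `α* = χ/∫(H − H(q̄₀)) dπ*`. Then for every stopping time `τ̂` with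
`E[τ̂] < ∞` and every Borel probability measure `π̂` on the simplex that is a mean-preserving
contraction of the law of `q_τ̂`, one has `∫ û dπ̂ − κ̄·E[τ̂] ≤ û(q̄₀)`. -/
theorem stmt11
    {X A : Type*} [Fintype X] [Fintype A] [Nonempty A]
    (hX : 2 ≤ Fintype.card X)
    (u : A → X → ℝ)
    (H : (X → ℝ) → ℝ) (hH : ContDiff ℝ 2 H)
    (m : ℝ) (hm : 0 < m) (hHconv : StrongConvexOn (stdSimplex ℝ X) m H)
    (κ χ : ℝ) (hκ : 0 < κ) (hχ : 0 < χ)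
    (qbar : X → ℝ) (hqbar : qbar ∈ stdSimplex ℝ X)
    -- the measure π* and its properties
    (πstar : Measure (X → ℝ)) (hπprob : IsProbabilityMeasure πstar)
    (hπsupp : πstar (stdSimplex ℝ X) = 1)
    (hπbary : (∫ q', q' ∂πstar) = qbar)
    (hπnondeg : πstar {qbar} ≠ 1)
    (hπpos : 0 < ∫ q', (H q' - H qbar) ∂πstar)
    (hπeq : (∫ q', (uhat u q' - uhat u qbar) ∂πstar) =
      (κ / χ) * ∫ q', (H q' - H qbar) ∂πstar)
    (αstar : ℝ) (hα : αstar = χ / ∫ q', (H q' - H qbar) ∂πstar)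
    -- the α*-dilution of π*
    {Ω : Type*} {mΩ : MeasurableSpace Ω} (P : Measure Ω) [IsProbabilityMeasure P]
    (T : Ω → ℝ≥0) (hTmeas : Measurable T)
    (hTexp : ∀ t : ℝ≥0, P {ω | t < T ω} = ENNReal.ofReal (Real.exp (-(αstar * (t : ℝ)))))
    (Q : Ω → (X → ℝ)) (hQmeas : Measurable Q)
    (hQlaw : Measure.map Q P = πstar)
    (hindep : IndepFun T Q P)
    (q : ℝ≥0 → Ω → (X → ℝ))
    (hq : ∀ t ω, q t ω = if t < T ω then qbar else Q ω)
    (hqsm : ∀ t, StronglyMeasurable (q t))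
    (𝒢 : Filtration ℝ≥0 mΩ) (h𝒢 : 𝒢 = Filtration.natural q hqsm) :
    ∀ τhat : Ω → ℝ≥0, IsStoppingTime 𝒢 (fun ω => (τhat ω : WithTop ℝ≥0)) → Integrable (fun ω => (τhat ω : ℝ)) P →
    ∀ πhat : Measure (X → ℝ), IsProbabilityMeasure πhat → πhat (stdSimplex ℝ X) = 1 →
      -- π̂ is a mean-preserving contraction of the law of q_τ̂
      (∀ f : (X → ℝ) → ℝ, ContinuousOn f (stdSimplex ℝ X) →
        ConvexOn ℝ (stdSimplex ℝ X) f →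
        (∫ q', f q' ∂πhat) ≤ ∫ ω, f (q (τhat ω) ω) ∂P) →
      (∫ q', uhat u q' ∂πhat) - κ * (∫ ω, (τhat ω : ℝ) ∂P) ≤ uhat u qbar :=
  stmt11_general u H κ χ hκ hχ qbar πstar hπprob hπsupp hπpos hπeq αstar hα P T hTmeas hTexp Q
    hQmeas hQlaw hindep q hq hqsm 𝒢 h𝒢
end

section
/- Let a < b be real numbers, m ∈ [a, b], and let h : [a, b] → ℝ be continuous and strictly convex. Among all Borel probability measures π on [a, b] with mean ∫ x dπ(x) = m, the integral ∫ h dπ is maximized by the two-point measure π* = ((b − m)/(b − a))·δ_a + ((m − a)/(b − a))·δ_b, and π* is the unique maximizer. (Key step in the proof of the paper's Proposition 7.) -/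
open MeasureTheory Set
open scoped ENNReal

/-!
Let `ℓ` be the chord of `h` through `(a, h a)` and `(b, h b)`. Convexity gives `h ≤ ℓ` on `[a, b]`,
strictly on `(a, b)`. Since `ℓ` is affine, `∫ ℓ dπ = ℓ m` for every admissible `π`, and `π*`,
living on `{a, b}` where `h = ℓ`, attains this value. Equality `∫ h dπ = ℓ m` forces
`π (a, b) = 0`, so `π` lives on `{a, b}`, and a probability measure on two points is determined
by its mean.
-/

section TwoPointMeasure

variable {α : Type*} [MeasurableSpace α]

theorem integral_smul_dirac_add_smul_dirac [MeasurableSingletonClass α] {E : Type*}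
    [NormedAddCommGroup E] [NormedSpace ℝ E] [CompleteSpace E] (f : α → E) (a b : α) {p q : ℝ}
    (hp : 0 ≤ p) (hq : 0 ≤ q) :
    ∫ x, f x ∂(ENNReal.ofReal p • Measure.dirac a + ENNReal.ofReal q • Measure.dirac b)
      = p • f a + q • f b := by
  rw [integral_add_measure
      ((integrable_dirac enorm_lt_top).smul_measure ENNReal.ofReal_ne_top)
      ((integrable_dirac enorm_lt_top).smul_measure ENNReal.ofReal_ne_top),
    integral_smul_measure, integral_smul_measure, integral_dirac, integral_dirac,
    ENNReal.toReal_ofReal hp, ENNReal.toReal_ofReal hq]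

theorem smul_dirac_add_smul_dirac_apply_of_mem {a b : α} {s : Set α} (ha : a ∈ s) (hb : b ∈ s)
    {p q : ℝ} (hp : 0 ≤ p) (hq : 0 ≤ q) :
    (ENNReal.ofReal p • Measure.dirac a + ENNReal.ofReal q • Measure.dirac b) s
      = ENNReal.ofReal (p + q) := by
  simp [Measure.dirac_apply_of_mem ha, Measure.dirac_apply_of_mem hb, ENNReal.ofReal_add hp hq]

theorem MeasureTheory.Measure.eq_smul_dirac_add_smul_dirac [MeasurableSingletonClass α]
    {μ : Measure α} {a b : α} (hab : a ≠ b) (h : ∀ᵐ x ∂μ, x ∈ ({a, b} : Set α)) :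
    μ = μ {a} • Measure.dirac a + μ {b} • Measure.dirac b := by
  calc μ = μ.restrict ({a} ∪ {b}) := (Measure.restrict_eq_self_of_ae_mem h).symm
    _ = μ.restrict {a} + μ.restrict {b} :=
      Measure.restrict_union (disjoint_singleton.2 hab) (measurableSet_singleton b)
    _ = _ := by rw [Measure.restrict_singleton, Measure.restrict_singleton]

end TwoPointMeasure

theorem ContinuousOn.integrable_of_ae_mem {X E : Type*} [MeasurableSpace X] [TopologicalSpace X]
    [OpensMeasurableSpace X] [T2Space X] [NormedAddCommGroup E] {μ : Measure X} [IsFiniteMeasure μ]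
    {f : X → E} {s : Set X} (hf : ContinuousOn f s) (hs : IsCompact s) (h : ∀ᵐ x ∂μ, x ∈ s) :
    Integrable f μ := by
  rw [← Measure.restrict_eq_self_of_ae_mem h]
  exact hf.integrableOn_compact hs

noncomputable def chord (h : ℝ → ℝ) (a b x : ℝ) : ℝ := h a + (h b - h a) / (b - a) * (x - a)

section Chord

variable {h : ℝ → ℝ} {a b x : ℝ}

theorem StrictConvexOn.lt_chord (hconv : StrictConvexOn ℝ (Icc a b) h) (hx : x ∈ Ioo a b) :
    h x < chord h a b x := by
  have hba : 0 < b - a := by linarith [hx.1, hx.2]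
  have key := hconv.secant_strict_mono_aux1 (left_mem_Icc.2 (hx.1.trans hx.2).le)
    (right_mem_Icc.2 (hx.1.trans hx.2).le) hx.1 hx.2
  rw [chord, ← mul_lt_mul_iff_right₀ hba]
  field_simp
  linarith

theorem ConvexOn.le_chord (hconv : ConvexOn ℝ (Icc a b) h) (hx : x ∈ Icc a b) :
    h x ≤ chord h a b x := by
  rcases eq_endpoints_or_mem_Ioo_of_mem_Icc hx with rfl | rfl | hx'
  · simp [chord]
  · rcases eq_or_lt_of_le hx.1 with rfl | hab
    · simp [chord]
    · simp [chord, sub_ne_zero.2 hab.ne']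
  · have hba : 0 < b - a := by linarith [hx'.1, hx'.2]
    have key := hconv.secant_mono_aux1 (left_mem_Icc.2 (hx.1.trans hx.2))
      (right_mem_Icc.2 (hx.1.trans hx.2)) hx'.1 hx'.2
    rw [chord, ← mul_le_mul_iff_right₀ hba]
    field_simp
    linarith

theorem integral_chord {μ : Measure ℝ} [IsProbabilityMeasure μ]
    (hint : Integrable (fun x => x) μ) :
    ∫ x, chord h a b x ∂μ = chord h a b (∫ x, x ∂μ) := by
  have hint' : Integrable (fun x => x - a) μ := hint.sub (integrable_const a)
  simp only [chord]
  rw [integral_add (integrable_const _) (hint'.const_mul _), integral_const, integral_const_mul,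
    integral_sub hint (integrable_const a), integral_const]
  simp

end Chord

section ChordBound

variable {h : ℝ → ℝ} {a b : ℝ} {μ : Measure ℝ} [IsProbabilityMeasure μ]

theorem integrable_id_of_ae_mem_Icc (hsupp : ∀ᵐ x ∂μ, x ∈ Icc a b) :
    Integrable (fun x => x) μ :=
  continuousOn_id.integrable_of_ae_mem isCompact_Icc hsupp

theorem integrable_chord (hsupp : ∀ᵐ x ∂μ, x ∈ Icc a b) : Integrable (chord h a b) μ :=
  (integrable_const _).add
    (((integrable_id_of_ae_mem_Icc hsupp).sub (integrable_const a)).const_mul _)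

theorem integral_chord_sub_eq (hcont : ContinuousOn h (Icc a b))
    (hsupp : ∀ᵐ x ∂μ, x ∈ Icc a b) :
    ∫ x, (chord h a b x - h x) ∂μ = chord h a b (∫ x, x ∂μ) - ∫ x, h x ∂μ := by
  rw [integral_sub (integrable_chord hsupp) (hcont.integrable_of_ae_mem isCompact_Icc hsupp),
    integral_chord (integrable_id_of_ae_mem_Icc hsupp)]

theorem ConvexOn.integral_le_chord (hconv : ConvexOn ℝ (Icc a b) h)
    (hcont : ContinuousOn h (Icc a b)) (hsupp : ∀ᵐ x ∂μ, x ∈ Icc a b) :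
    ∫ x, h x ∂μ ≤ chord h a b (∫ x, x ∂μ) := by
  rw [← sub_nonneg, ← integral_chord_sub_eq hcont hsupp]
  exact integral_nonneg_of_ae (hsupp.mono fun x hx => sub_nonneg.2 (hconv.le_chord hx))

theorem StrictConvexOn.measure_Ioo_eq_zero_of_integral_eq_chord
    (hconv : StrictConvexOn ℝ (Icc a b) h) (hcont : ContinuousOn h (Icc a b))
    (hsupp : ∀ᵐ x ∂μ, x ∈ Icc a b) (heq : ∫ x, h x ∂μ = chord h a b (∫ x, x ∂μ)) :
    μ (Ioo a b) = 0 := by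
  have hzero : (fun x => chord h a b x - h x) =ᵐ[μ] 0 := by
    refine (integral_eq_zero_iff_of_nonneg_ae ?_ ?_).1 ?_
    · exact hsupp.mono fun x hx => sub_nonneg.2 (hconv.convexOn.le_chord hx)
    · exact (integrable_chord hsupp).sub (hcont.integrable_of_ae_mem isCompact_Icc hsupp)
    · rw [integral_chord_sub_eq hcont hsupp, heq, sub_self]
  rw [measure_eq_zero_iff_ae_notMem]
  filter_upwards [hzero] with x hx hxIoo
  exact (sub_pos.2 (hconv.lt_chord hxIoo)).ne' hx

end ChordBound

theorem eq_smul_dirac_add_smul_dirac_of_integral_id {μ : Measure ℝ} [IsProbabilityMeasure μ]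
    {a b m : ℝ} (hab : a < b) (hsupp : ∀ᵐ x ∂μ, x ∈ ({a, b} : Set ℝ)) (hmean : ∫ x, x ∂μ = m) :
    μ = ENNReal.ofReal ((b - m) / (b - a)) • Measure.dirac a
      + ENNReal.ofReal ((m - a) / (b - a)) • Measure.dirac b := by
  obtain ⟨p, q, hp, hq, rfl⟩ : ∃ p q : ℝ, 0 ≤ p ∧ 0 ≤ q ∧
      μ = ENNReal.ofReal p • Measure.dirac a + ENNReal.ofReal q • Measure.dirac b :=
    ⟨(μ {a}).toReal, (μ {b}).toReal, ENNReal.toReal_nonneg, ENNReal.toReal_nonneg, by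
      simpa only [ENNReal.ofReal_toReal (measure_ne_top μ _)]
        using Measure.eq_smul_dirac_add_smul_dirac hab.ne hsupp⟩
  have hpq : p + q = 1 := by
    rw [← ENNReal.ofReal_eq_one, ← smul_dirac_add_smul_dirac_apply_of_mem (mem_univ a)
      (mem_univ b) hp hq, measure_univ]
  rw [integral_smul_dirac_add_smul_dirac _ _ _ hp hq, smul_eq_mul, smul_eq_mul] at hmean
  have hba : b - a ≠ 0 := sub_ne_zero.2 hab.ne'
  rw [show (b - m) / (b - a) = p by field_simp; linear_combination hmean - b * hpq,
    show (m - a) / (b - a) = q by field_simp; linear_combination a * hpq - hmean]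

/-- **key step in the proof of the paper's Proposition 7.** Let `a < b`,
`m ∈ [a, b]`, and `h : [a, b] → ℝ` continuous and strictly convex. Among all Borel
probability measures on `[a, b]` with mean `m`, the integral `∫ h dπ` is maximized by the
two-point measure `π* = ((b − m)/(b − a))·δ_a + ((m − a)/(b − a))·δ_b`, and `π*` is the
unique such maximizer. -/
theorem stmt13
    (a b : ℝ) (hab : a < b) (m : ℝ) (hm : m ∈ Icc a b)
    (h : ℝ → ℝ) (hcont : ContinuousOn h (Icc a b))
    (hconv : StrictConvexOn ℝ (Icc a b) h)
    (πstar : Measure ℝ)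
    (hπstar : πstar = (ENNReal.ofReal ((b - m) / (b - a))) • Measure.dirac a
      + (ENNReal.ofReal ((m - a) / (b - a))) • Measure.dirac b) :
    -- π* is admissible
    (IsProbabilityMeasure πstar ∧ πstar (Icc a b) = 1 ∧ (∫ x, x ∂πstar) = m) ∧
    -- π* maximizes ∫ h dπ among admissible π
    (∀ π : Measure ℝ, IsProbabilityMeasure π → π (Icc a b) = 1 → (∫ x, x ∂π) = m →
      (∫ x, h x ∂π) ≤ ∫ x, h x ∂πstar) ∧
    -- π* is the unique maximizer
    (∀ π : Measure ℝ, IsProbabilityMeasure π → π (Icc a b) = 1 → (∫ x, x ∂π) = m →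
      (∫ x, h x ∂π) = (∫ x, h x ∂πstar) → π = πstar) := by
  have hba : b - a ≠ 0 := sub_ne_zero.2 hab.ne'
  have hp : 0 ≤ (b - m) / (b - a) := div_nonneg (sub_nonneg.2 hm.2) (sub_nonneg.2 hab.le)
  have hq : 0 ≤ (m - a) / (b - a) := div_nonneg (sub_nonneg.2 hm.1) (sub_nonneg.2 hab.le)
  have hpq : (b - m) / (b - a) + (m - a) / (b - a) = 1 := by field_simp; ring
  have hstar_apply : ∀ s, a ∈ s → b ∈ s → πstar s = 1 := fun s ha hb => by
    rw [hπstar, smul_dirac_add_smul_dirac_apply_of_mem ha hb hp hq, hpq, ENNReal.ofReal_one]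
  have hstar_h : ∫ x, h x ∂πstar = chord h a b m := by
    rw [hπstar, integral_smul_dirac_add_smul_dirac _ _ _ hp hq, smul_eq_mul, smul_eq_mul, chord]
    field_simp; ring
  have hsupp : ∀ (π : Measure ℝ) [IsProbabilityMeasure π], π (Icc a b) = 1 →
      ∀ᵐ x ∂π, x ∈ Icc a b := fun π _ hπ =>
    (mem_ae_iff_prob_eq_one measurableSet_Icc).2 hπ
  refine ⟨⟨⟨hstar_apply univ (mem_univ a) (mem_univ b)⟩,
    hstar_apply _ (left_mem_Icc.2 hab.le) (right_mem_Icc.2 hab.le), ?_⟩, ?_, ?_⟩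
  · rw [hπstar, integral_smul_dirac_add_smul_dirac _ _ _ hp hq, smul_eq_mul, smul_eq_mul]
    field_simp; ring
  · intro π _ hπ hmean
    rw [hstar_h, ← hmean]
    exact hconv.convexOn.integral_le_chord hcont (hsupp π hπ)
  · intro π _ hπ hmean heq
    have hIoo := hconv.measure_Ioo_eq_zero_of_integral_eq_chord hcont (hsupp π hπ)
      (by rw [heq, hstar_h, hmean])
    have hpair : ∀ᵐ x ∂π, x ∈ ({a, b} : Set ℝ) := by
      filter_upwards [hsupp π hπ, measure_eq_zero_iff_ae_notMem.1 hIoo] with x hx hx'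
      exact Icc_sdiff_Ioo_same hab.le ▸ ⟨hx, hx'⟩
    rw [hπstar]
    exact eq_smul_dirac_add_smul_dirac_of_integral_id hab hpair hmean
end
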